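/- arXiv:1204.0403 — 7 statements merged into one kernel-verified Lean document; each statement's English description precedes it below -/
import Mathlib

section
/- Let P ⊆ ℝ be a nonempty open set with Lebesgue measure λ(P) > 1. Then there exist x, y ∈ P with dist(x,y) a positive integer. -/
open MeasureTheory Set

/-- Blichfeldt's principle for the lattice `T ℤ`, whose fundamental domain `(0, T]` has volume `T`. -/
theorem Real.exists_sub_eq_zsmul_of_lt_volume {T : ℝ} (hT : 0 < T) {s : Set ℝ}
    (hs : NullMeasurableSet s) (h : ENNReal.ofReal T < volume s) :
    ∃ x ∈ s, ∃ y ∈ s, ∃ k : ℤ, k ≠ 0 ∧ y - x = k • T := by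
  have fund := isAddFundamentalDomain_Ioc hT 0
  rw [zero_add] at fund
  rw [← sub_zero T, ← Real.volume_Ioc] at h
  obtain ⟨x, hx, y, hy, ⟨_, k, rfl⟩, hk, hxy⟩ := fund.exists_ne_zero_vadd_eq hs h
  refine ⟨x, hx, y, hy, k, ?_, ?_⟩
  · rintro rfl
    exact hk (by simp)
  · rw [← hxy]
    simp [vadd_eq_add]

theorem measure_gt_one_integral_distance_general
    (P : Set ℝ) (hP : IsOpen P) (hvol : 1 < volume P) :
    ∃ x ∈ P, ∃ y ∈ P, ∃ n : ℕ, 0 < n ∧ dist x y = n := by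
  obtain ⟨x, hx, y, hy, k, hk, hxy⟩ :=
    Real.exists_sub_eq_zsmul_of_lt_volume one_pos hP.nullMeasurableSet (by simpa using hvol)
  refine ⟨x, hx, y, hy, k.natAbs, Int.natAbs_pos.2 hk, ?_⟩
  rw [dist_comm, Real.dist_eq, hxy, zsmul_one, Nat.cast_natAbs, Int.cast_abs]

theorem measure_gt_one_integral_distance
    (P : Set ℝ) (hP : IsOpen P) (hne : P.Nonempty) (hvol : 1 < volume P) :
    ∃ x ∈ P, ∃ y ∈ P, ∃ n : ℕ, 0 < n ∧ dist x y = n :=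
  measure_gt_one_integral_distance_general P hP hvol
end

section
/- Let P ⊆ ℝ be an open set with Lebesgue measure λ(P) ≤ 1. Then there exists a real number a such that the translate P + a is disjoint from ℤ. -/
/-!
Suppose every translate of `P` meets `ℤ`. Then the open sets `A m = {t ∈ (0, 1) | t + m ∈ P}`
cover `(0, 1)`, while their measures add up to at most `λ(P) ≤ 1`. Open sets covering `(0, 1)`
with total measure at most `1` overlap only in a null set, hence are disjoint, and by
connectedness of `(0, 1)` a single one of them is everything: `(k, k + 1) ⊆ P` for some `k`.
As `λ(P) ≤ 1`, the open set `P \ [k, k + 1]` is null, hence empty, so `P ⊆ (k, k + 1)`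
contains no integer, contradicting that `P + 0` meets `ℤ`.
-/

open MeasureTheory Set ENNReal Function

theorem IsPreconnected.subset_of_pairwise_disjoint {X ι : Type*} [TopologicalSpace X]
    {s : Set X} {U : ι → Set X} (hs : IsPreconnected s) (hU : ∀ i, IsOpen (U i))
    (hd : Pairwise (Disjoint on U)) (hsU : s ⊆ ⋃ i, U i) {i : ι} (hi : (s ∩ U i).Nonempty) :
    s ⊆ U i := by
  refine hs.subset_left_of_subset_union (v := ⋃ (j) (_ : j ≠ i), U j) (hU i)
    (isOpen_biUnion fun j _ => hU j) ?_ ?_ hi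
  · simpa only [disjoint_iUnion_right] using fun j hj => hd hj.symm
  · intro x hx
    obtain ⟨j, hj⟩ := mem_iUnion.mp (hsU hx)
    by_cases hji : j = i
    · exact Or.inl (hji ▸ hj)
    · exact Or.inr (mem_biUnion hji hj)

section Measure

variable {α ι : Type*} [MeasurableSpace α] {μ : Measure α} [Countable ι]

theorem measure_iUnion_add_measure_inter_le_tsum {s : ι → Set α}
    (hs : ∀ i, NullMeasurableSet (s i) μ) {i j : ι} (hij : i ≠ j) :
    μ (⋃ k, s k) + μ (s i ∩ s j) ≤ ∑' k, μ (s k) := by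
  classical
  set rest := ⋃ (k) (_ : k ≠ i), s k
  have hrest : μ rest ≤ ∑' k, if k = i then 0 else μ (s k) :=
    (measure_iUnion_le _).trans <| ENNReal.tsum_le_tsum fun k => by
      by_cases hk : k = i <;> simp [hk]
  calc μ (⋃ k, s k) + μ (s i ∩ s j)
      ≤ μ (s i ∪ rest) + μ (s i ∩ rest) := by
        gcongr
        · exact iUnion_subset fun k => by
            by_cases hk : k = i
            · exact hk ▸ subset_union_left
            · exact subset_union_of_subset_right (subset_biUnion_of_mem hk) _
        · exact subset_biUnion_of_mem (u := s) hij.symm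
    _ = μ (s i) + μ rest :=
        measure_union_add_inter₀ _ (.iUnion fun k => .iUnion fun _ => hs k)
    _ ≤ ∑' k, μ (s k) := by
        rw [ENNReal.tsum_eq_add_tsum_ite i]
        gcongr

theorem pairwise_aedisjoint_of_tsum_measure_le {s : ι → Set α}
    (hs : ∀ i, NullMeasurableSet (s i) μ) (hsum : ∑' i, μ (s i) ≤ μ (⋃ i, s i))
    (hfin : μ (⋃ i, s i) ≠ ∞) : Pairwise (AEDisjoint μ on s) := fun i j hij => by
  have := (measure_iUnion_add_measure_inter_le_tsum hs hij).trans hsum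
  rwa [(ENNReal.cancel_of_ne hfin).add_le_iff_nonpos_right, nonpos_iff_eq_zero] at this

end Measure

section OpenSets

variable {α : Type*} [TopologicalSpace α] [MeasurableSpace α] [OpensMeasurableSpace α]
  {μ : Measure α} [μ.IsOpenPosMeasure]

theorem pairwise_disjoint_of_tsum_measure_le {ι : Type*} [Countable ι] {U : ι → Set α}
    (hU : ∀ i, IsOpen (U i)) (hsum : ∑' i, μ (U i) ≤ μ (⋃ i, U i))
    (hfin : μ (⋃ i, U i) ≠ ∞) : Pairwise (Disjoint on U) := fun i j hij =>
  disjoint_iff.mpr <| ((hU i).inter (hU j)).eq_empty_of_measure_zero <|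
    pairwise_aedisjoint_of_tsum_measure_le (fun k => (hU k).measurableSet.nullMeasurableSet)
      hsum hfin hij

theorem IsOpen.subset_interior_closure_of_measure_le {s t : Set α} (hs : IsOpen s)
    (hts : t ⊆ s) (hμ : μ s ≤ μ t) (ht : μ t ≠ ∞) : s ⊆ interior (closure t) := by
  have hopen : IsOpen (s \ closure t) := hs.sdiff isClosed_closure
  have hnull : μ (s \ closure t) = 0 := by
    have : μ t + μ (s \ closure t) ≤ μ t := calc
      μ t + μ (s \ closure t) = μ (t ∪ s \ closure t) :=
        (measure_union (disjoint_sdiff_right.mono_left subset_closure) hopen.measurableSet).symm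
      _ ≤ μ s := measure_mono (union_subset hts sdiff_subset)
      _ ≤ μ t := hμ
    rwa [(ENNReal.cancel_of_ne ht).add_le_iff_nonpos_right, nonpos_iff_eq_zero] at this
  exact interior_maximal (sdiff_eq_empty.mp (hopen.eq_empty_of_measure_zero hnull)) hs

end OpenSets

theorem Real.tsum_volume_Ioo_inter_preimage_add_intCast_le {s : Set ℝ} (hs : MeasurableSet s) :
    ∑' m : ℤ, volume (Ioo 0 1 ∩ (· + (m : ℝ)) ⁻¹' s) ≤ volume s :=
  calc ∑' m : ℤ, volume (Ioo 0 1 ∩ (· + (m : ℝ)) ⁻¹' s)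
      = ∑' m : ℤ, volume (Ioo (m : ℝ) (m + 1) ∩ s) := tsum_congr fun m => by
        rw [← measure_preimage_add_right volume (m : ℝ) (Ioo _ _ ∩ s), preimage_inter,
          preimage_add_const_Ioo, sub_self, add_sub_cancel_left]
    _ ≤ volume (⋃ m : ℤ, Ioo (m : ℝ) (m + 1) ∩ s) :=
        tsum_meas_le_meas_iUnion_of_disjoint _ (fun _ => measurableSet_Ioo.inter hs)
          fun _ _ h =>
            (pairwise_disjoint_Ioo_intCast ℝ h).mono inter_subset_left inter_subset_left
    _ ≤ volume s := measure_mono (iUnion_subset fun _ => inter_subset_right)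

theorem measure_le_one_exists_shift_avoiding_integers
    (P : Set ℝ) (hP : IsOpen P) (hvol : volume P ≤ 1) :
    ∃ a : ℝ, ∀ x ∈ P, ¬ ∃ m : ℤ, x + a = m := by
  by_contra! hmeet
  set A : ℤ → Set ℝ := fun m => Ioo 0 1 ∩ (· + (m : ℝ)) ⁻¹' P
  have hA_open : ∀ m, IsOpen (A m) := fun m =>
    isOpen_Ioo.inter (hP.preimage (continuous_add_const _))
  have hcover : Ioo 0 1 ⊆ ⋃ m, A m := fun t ht => by
    obtain ⟨x, hx, m, hxm⟩ := hmeet (-t)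
    exact mem_iUnion.mpr ⟨m, ht, by simpa [← hxm] using hx⟩
  have hunion : ⋃ m, A m = Ioo 0 1 := (iUnion_subset fun _ => inter_subset_left).antisymm hcover
  have hdisj : Pairwise (Disjoint on A) := by
    refine pairwise_disjoint_of_tsum_measure_le (μ := volume) hA_open ?_ (by simp [hunion])
    calc ∑' m, volume (A m) ≤ volume P :=
          Real.tsum_volume_Ioo_inter_preimage_add_intCast_le hP.measurableSet
      _ ≤ 1 := hvol
      _ = volume (⋃ m, A m) := by simp [hunion]
  obtain ⟨k, hk⟩ := mem_iUnion.mp (hcover (show (1 / 2 : ℝ) ∈ Ioo 0 1 by norm_num))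
  have hIoo : Ioo (k : ℝ) (k + 1) ⊆ P := by
    have hAk : Ioo 0 1 ⊆ A k :=
      isPreconnected_Ioo.subset_of_pairwise_disjoint hA_open hdisj hcover ⟨_, hk.1, hk⟩
    have := image_subset_iff.mpr (subset_inter_iff.mp hAk).2
    rwa [image_add_const_Ioo, zero_add, add_comm] at this
  have hPIoo : P ⊆ Ioo (k : ℝ) (k + 1) := by
    simpa [closure_Ioo, interior_Icc] using
      hP.subset_interior_closure_of_measure_le (μ := volume) hIoo (by simpa using hvol) (by simp)
  obtain ⟨x, hx, m, hxm⟩ := hmeet 0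
  rw [add_zero] at hxm
  obtain ⟨hkm, hmk⟩ := hPIoo (hxm ▸ hx)
  norm_cast at hkm hmk
  omega
end

section
/- Let C₁, C₂ be distinct connected components of an open set P ⊆ ℝ^d containing no pair of points at positive integer distance. If the d-dimensional Lebesgue measure λ_d(C₁ ∪ C₂) exceeds the volume of the d-dimensional ball of diameter 1, then dist(C₁, C₂) ≥ 1. -/
/-!
If two components came closer than distance 1, then, since `P` contains no two points at
distance exactly 1, the intermediate value theorem for the distance to a point along the
(preconnected) components shows that all distances inside `C₁ ∪ C₂` are less than 1. The
isodiametric inequality then bounds the volume of `C₁ ∪ C₂` by that of the ball of diameter 1.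

The isodiametric inequality comes from the Brunn–Minkowski inequality `|K| ≤ |½ (K - K)|`, since
`½ (K - K)` lies in the ball of radius `diam K / 2`. Brunn–Minkowski in its multiplicative form
`|K| |L| ≤ |½ (K + L)|²` is proved by induction on the dimension, slicing along the first
coordinate and applying the one-dimensional Prékopa–Leindler inequality to the slice volumes;
the latter follows from `|A| + |B| ≤ |A + B|` on `ℝ`, applied to level sets.
-/

open Metric MeasureTheory

/-- Distance between two subsets of a metric space. -/
noncomputable def setDist {E : Type*} [PseudoMetricSpace E] (A B : Set E) : ℝ :=
  sInf {r | ∃ x ∈ A, ∃ y ∈ B, r = dist x y}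

open Set
open scoped ENNReal NNReal Pointwise

theorem lintegral_eq_lintegral_meas_ofReal_lt {α : Type*} [MeasurableSpace α] (μ : Measure α)
    [SFinite μ] {f : α → ℝ≥0∞} (hf : Measurable f) :
    ∫⁻ a, f a ∂μ = ∫⁻ t in Ioi 0, μ {a | ENNReal.ofReal t < f a} := by
  set S : Set (α × ℝ) := {p | ENNReal.ofReal p.2 < f p.1}
  have hS : MeasurableSet S :=
    measurableSet_lt measurable_snd.ennreal_ofReal (hf.comp measurable_fst)
  have hlevel (x : ℝ≥0∞) : volume.restrict (Ioi 0) {t : ℝ | ENNReal.ofReal t < x} = x := by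
    rw [Measure.restrict_apply' measurableSet_Ioi]
    rcases eq_or_ne x ∞ with rfl | hx
    · simp
    · have hIoo : {t : ℝ | ENNReal.ofReal t < x} ∩ Ioi 0 = Ioo 0 x.toReal := by
        ext t
        simp only [mem_inter_iff, mem_ofPred_eq, mem_Ioi, mem_Ioo]
        constructor
        · rintro ⟨ht, h0⟩; exact ⟨h0, (ENNReal.ofReal_lt_iff_lt_toReal h0.le hx).1 ht⟩
        · rintro ⟨h0, ht⟩; exact ⟨(ENNReal.ofReal_lt_iff_lt_toReal h0.le hx).2 ht, h0⟩
      rw [hIoo, Real.volume_Ioo, sub_zero, ENNReal.ofReal_toReal hx]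
  calc ∫⁻ a, f a ∂μ = ∫⁻ a, volume.restrict (Ioi 0) (Prod.mk a ⁻¹' S) ∂μ := by
        simp only [S, preimage_ofPred_eq, hlevel]
    _ = ∫⁻ t in Ioi 0, μ ((·, t) ⁻¹' S) := by
        rw [← Measure.prod_apply hS, Measure.prod_apply_symm hS]

theorem Real.volume_add_volume_le_volume_add_of_isCompact {K L : Set ℝ} (hK : IsCompact K)
    (hL : IsCompact L) (hK' : K.Nonempty) (hL' : L.Nonempty) :
    volume K + volume L ≤ volume (K + L) := by
  set k := sSup K
  set l := sInf L
  have hX : K + {l} ⊆ Iic (k + l) := by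
    rintro _ ⟨x, hx, _, rfl, rfl⟩
    exact add_le_add_left (le_csSup hK.bddAbove hx) l
  have hY : {k} + L ⊆ Ici (k + l) := by
    rintro _ ⟨_, rfl, y, hy, rfl⟩
    exact add_le_add_right (csInf_le hL.bddBelow hy) k
  have hXY : (K + {l}) ∪ ({k} + L) ⊆ K + L :=
    union_subset (add_subset_add_left (singleton_subset_iff.2 (hL.sInf_mem hL')))
      (add_subset_add_right (singleton_subset_iff.2 (hK.sSup_mem hK')))
  have hnull : volume ((K + {l}) ∩ ({k} + L)) = 0 :=
    measure_mono_null ((inter_subset_inter hX hY).trans_eq Iic_inter_Ici)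
      (by rw [Icc_self]; exact measure_singleton _)
  calc volume K + volume L = volume (K + {l}) + volume ({k} + L) := by
        rw [add_comm K, singleton_add, singleton_add, image_add_left, image_add_left,
          measure_preimage_add, measure_preimage_add]
    _ = volume ((K + {l}) ∪ ({k} + L)) := by
        rw [← measure_union_add_inter _ (isCompact_singleton.add hL).measurableSet, hnull, add_zero]
    _ ≤ volume (K + L) := measure_mono hXY

theorem Real.volume_add_volume_le_volume_add {A B : Set ℝ} (hA : MeasurableSet A)
    (hB : MeasurableSet B) (hA' : A.Nonempty) (hB' : B.Nonempty) :
    volume A + volume B ≤ volume (A + B) := by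
  obtain ⟨a, ha⟩ := hA'
  obtain ⟨b, hb⟩ := hB'
  rw [hA.measure_eq_iSup_isCompact, hB.measure_eq_iSup_isCompact]
  simp only [iSup_and']
  refine ENNReal.biSup_add_biSup_le' ⟨∅, empty_subset _, isCompact_empty⟩
    ⟨∅, empty_subset _, isCompact_empty⟩ fun K ⟨hKA, hK⟩ L ⟨hLB, hL⟩ => ?_
  calc volume K + volume L ≤ volume (insert a K) + volume (insert b L) :=
        add_le_add (measure_mono (subset_insert a K)) (measure_mono (subset_insert b L))
    _ ≤ volume (insert a K + insert b L) :=
        volume_add_volume_le_volume_add_of_isCompact (hK.insert a) (hL.insert b)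
          (insert_nonempty a K) (insert_nonempty b L)
    _ ≤ volume (A + B) :=
        measure_mono (add_subset_add (insert_subset ha hKA) (insert_subset hb hLB))

theorem Real.volume_eq_two_mul_volume_inv_two_smul (S : Set ℝ) :
    volume S = 2 * volume ((2⁻¹ : ℝ) • S) := by
  rw [Measure.addHaar_smul, Module.finrank_self, pow_one, abs_of_pos (by norm_num),
    ENNReal.ofReal_inv_of_pos two_pos, ENNReal.ofReal_ofNat, ← mul_assoc,
    ENNReal.mul_inv_cancel two_ne_zero ENNReal.ofNat_ne_top, one_mul]

theorem lintegral_add_lintegral_le_two_mul_of_iSup_eq {f g h : ℝ → ℝ≥0∞} (hf : Measurable f)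
    (hg : Measurable g) (hh : Measurable h) (hfg : ⨆ t, f t = ⨆ t, g t)
    (hfgh : ∀ t u, min (f t) (g u) ≤ h (2⁻¹ * (t + u))) :
    (∫⁻ t, f t) + ∫⁻ t, g t ≤ 2 * ∫⁻ t, h t := by
  -- equal suprema make the level sets of `f` and `g` at a height empty or nonempty together
  have hlevel (x : ℝ≥0∞) :
      volume {t | x < f t} + volume {t | x < g t} ≤ 2 * volume {t | x < h t} := by
    rcases lt_or_ge x (⨆ t, f t) with hx | hx
    · obtain ⟨t, ht⟩ := lt_iSup_iff.1 hx
      obtain ⟨u, hu⟩ := lt_iSup_iff.1 (hfg ▸ hx)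
      calc volume {t | x < f t} + volume {t | x < g t}
          ≤ volume ({t | x < f t} + {t | x < g t}) :=
            Real.volume_add_volume_le_volume_add (hf measurableSet_Ioi) (hg measurableSet_Ioi)
              ⟨t, ht⟩ ⟨u, hu⟩
        _ = 2 * volume ((2⁻¹ : ℝ) • ({t | x < f t} + {t | x < g t})) :=
            Real.volume_eq_two_mul_volume_inv_two_smul _
        _ ≤ 2 * volume {t | x < h t} := by
            gcongr
            rintro _ ⟨_, ⟨t, ht, u, hu, rfl⟩, rfl⟩
            exact (lt_min ht hu).trans_le (hfgh t u)
    · have hf0 : {t | x < f t} = ∅ :=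
        eq_empty_of_forall_notMem fun t ht => ((le_iSup f t).trans hx).not_gt ht
      have hg0 : {t | x < g t} = ∅ :=
        eq_empty_of_forall_notMem fun t ht => ((le_iSup g t).trans (hfg ▸ hx)).not_gt ht
      simp [hf0, hg0]
  simp only [lintegral_eq_lintegral_meas_ofReal_lt volume hf,
    lintegral_eq_lintegral_meas_ofReal_lt volume hg,
    lintegral_eq_lintegral_meas_ofReal_lt volume hh]
  calc _ ≤ ∫⁻ r in Ioi 0, (volume {t | ENNReal.ofReal r < f t} +
          volume {t | ENNReal.ofReal r < g t}) := le_lintegral_add _ _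
    _ ≤ ∫⁻ r in Ioi 0, 2 * volume {t | ENNReal.ofReal r < h t} := lintegral_mono fun r => hlevel _
    _ = _ := lintegral_const_mul' _ _ ENNReal.ofNat_ne_top

theorem ENNReal.mul_le_sq_of_add_le_two_mul {x y z : ℝ≥0∞} (h : x + y ≤ 2 * z) :
    x * y ≤ z ^ 2 := by
  wlog hxy : x ≤ y generalizing x y
  · rw [mul_comm]; exact this (add_comm x y ▸ h) (le_of_not_ge hxy)
  obtain ⟨δ, rfl⟩ := exists_add_of_le hxy
  have h4 : 4 * (x * (x + δ)) ≤ 4 * z ^ 2 :=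
    calc 4 * (x * (x + δ)) ≤ 4 * (x * (x + δ)) + δ ^ 2 := le_self_add
      _ = (x + (x + δ)) ^ 2 := by ring
      _ ≤ (2 * z) ^ 2 := by gcongr
      _ = 4 * z ^ 2 := by ring
  exact (ENNReal.mul_le_mul_iff_right (by norm_num) (by norm_num)).1 h4

theorem ENNReal.exists_mul_eq_inv_mul {a b : ℝ≥0∞} (ha₀ : a ≠ 0) (ha : a ≠ ∞) (hb₀ : b ≠ 0)
    (hb : b ≠ ∞) : ∃ c : ℝ≥0∞, c ≠ 0 ∧ c ≠ ∞ ∧ c * a = c⁻¹ * b := by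
  lift a to ℝ≥0 using ha
  lift b to ℝ≥0 using hb
  have hc : NNReal.sqrt (b / a) ≠ 0 := by simpa using And.intro hb₀ ha₀
  refine ⟨NNReal.sqrt (b / a), by simpa using hc, ENNReal.coe_ne_top, ?_⟩
  rw [← ENNReal.coe_inv hc]
  norm_cast
  rw [eq_inv_mul_iff_mul_eq₀ hc, ← mul_assoc, NNReal.mul_self_sqrt,
    div_mul_cancel₀ _ (by simpa using ha₀)]

/-- The one-dimensional Prékopa–Leindler inequality with `λ = 1/2`. -/
theorem lintegral_mul_lintegral_le_sq {f g h : ℝ → ℝ≥0∞} (hf : Measurable f)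
    (hg : Measurable g) (hh : Measurable h) (hf_top : ⨆ t, f t ≠ ∞) (hg_top : ⨆ t, g t ≠ ∞)
    (hfgh : ∀ t u, f t * g u ≤ h (2⁻¹ * (t + u)) ^ 2) :
    (∫⁻ t, f t) * ∫⁻ t, g t ≤ (∫⁻ t, h t) ^ 2 := by
  rcases eq_or_ne (⨆ t, f t) 0 with hf₀ | hf₀
  · simp [ENNReal.iSup_eq_zero.1 hf₀]
  rcases eq_or_ne (⨆ t, g t) 0 with hg₀ | hg₀
  · simp [ENNReal.iSup_eq_zero.1 hg₀]
  -- rescaling `f` and `g` by `c` and `c⁻¹` equalizes their suprema without changing `f t * g u`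
  obtain ⟨c, hc₀, hc, hfg⟩ := ENNReal.exists_mul_eq_inv_mul hf₀ hf_top hg₀ hg_top
  have hmin (t u : ℝ) : min (c * f t) (c⁻¹ * g u) ≤ h (2⁻¹ * (t + u)) := by
    refine (ENNReal.pow_le_pow_left_iff two_ne_zero).1 ?_
    calc min (c * f t) (c⁻¹ * g u) ^ 2 ≤ c * f t * (c⁻¹ * g u) := by
          rw [sq]; exact mul_le_mul' (min_le_left _ _) (min_le_right _ _)
      _ = f t * g u := by
          rw [mul_mul_mul_comm, ENNReal.mul_inv_cancel hc₀ hc, one_mul]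
      _ ≤ _ := hfgh t u
  have hadd := lintegral_add_lintegral_le_two_mul_of_iSup_eq (hf.const_mul c)
    (hg.const_mul c⁻¹) hh (by simp only [← ENNReal.mul_iSup, hfg]) hmin
  rw [lintegral_const_mul c hf, lintegral_const_mul c⁻¹ hg] at hadd
  calc (∫⁻ t, f t) * ∫⁻ t, g t = (c * ∫⁻ t, f t) * (c⁻¹ * ∫⁻ t, g t) := by
        rw [mul_mul_mul_comm, ENNReal.mul_inv_cancel hc₀ hc, one_mul]
    _ ≤ (∫⁻ t, h t) ^ 2 := ENNReal.mul_le_sq_of_add_le_two_mul hadd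

/-- For Lebesgue measure this is the multiplicative Brunn–Minkowski inequality with `λ = 1/2`. -/
def IsMidpointLogConcave {E : Type*} [AddCommGroup E] [Module ℝ E] [TopologicalSpace E]
    [MeasurableSpace E] (μ : Measure E) : Prop :=
  ∀ K L : Set E, IsCompact K → IsCompact L → μ K * μ L ≤ μ ((2⁻¹ : ℝ) • (K + L)) ^ 2

theorem IsCompact.preimage_prodMk {X Y : Type*} [TopologicalSpace X] [TopologicalSpace Y]
    [T2Space X] [T2Space Y] {K : Set (X × Y)} (hK : IsCompact K) (x : X) :
    IsCompact (Prod.mk x ⁻¹' K) :=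
  (hK.image continuous_snd).of_isClosed_subset (hK.isClosed.preimage (.prodMk_right x))
    fun y hy => ⟨(x, y), hy, rfl⟩

section

variable {E F : Type*} [NormedAddCommGroup E] [NormedSpace ℝ E] [MeasurableSpace E]
  [NormedAddCommGroup F] [NormedSpace ℝ F] [MeasurableSpace F] [BorelSpace F]

theorem isMidpointLogConcave_of_subsingleton [Subsingleton E] (μ : Measure E) :
    IsMidpointLogConcave μ := by
  intro K L _ _
  rcases K.eq_empty_or_nonempty with rfl | hK
  · simp
  rcases L.eq_empty_or_nonempty with rfl | hL
  · simp
  have hM : ((2⁻¹ : ℝ) • (K + L)).Nonempty := (hK.add hL).smul_set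
  rw [sq, hM.eq_univ]
  gcongr <;> exact subset_univ _

theorem IsMidpointLogConcave.prod [BorelSpace E] {μ : Measure E} [SFinite μ]
    [IsFiniteMeasureOnCompacts μ] (hμ : IsMidpointLogConcave μ) :
    IsMidpointLogConcave ((volume : Measure ℝ).prod μ) := by
  intro K L hK hL
  have hM : IsCompact ((2⁻¹ : ℝ) • (K + L)) := (hK.add hL).smul _
  have hslice (t u : ℝ) : (2⁻¹ : ℝ) • (Prod.mk t ⁻¹' K + Prod.mk u ⁻¹' L) ⊆
      Prod.mk (2⁻¹ * (t + u)) ⁻¹' ((2⁻¹ : ℝ) • (K + L)) := by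
    rintro _ ⟨_, ⟨x, hx, y, hy, rfl⟩, rfl⟩
    exact ⟨(t, x) + (u, y), ⟨(t, x), hx, (u, y), hy, rfl⟩, rfl⟩
  have hbdd {S : Set (ℝ × E)} (hS : IsCompact S) : ⨆ t, μ (Prod.mk t ⁻¹' S) ≠ ∞ :=
    ne_top_of_le_ne_top (hS.image continuous_snd).measure_lt_top.ne
      (iSup_le fun t => measure_mono fun y hy => ⟨(t, y), hy, rfl⟩)
  rw [Measure.prod_apply hK.measurableSet, Measure.prod_apply hL.measurableSet,
    Measure.prod_apply hM.measurableSet]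
  refine lintegral_mul_lintegral_le_sq (measurable_measure_prodMk_left hK.measurableSet)
    (measurable_measure_prodMk_left hL.measurableSet)
    (measurable_measure_prodMk_left hM.measurableSet) (hbdd hK) (hbdd hL) fun t u => ?_
  calc μ (Prod.mk t ⁻¹' K) * μ (Prod.mk u ⁻¹' L)
      ≤ μ ((2⁻¹ : ℝ) • (Prod.mk t ⁻¹' K + Prod.mk u ⁻¹' L)) ^ 2 :=
        hμ _ _ (hK.preimage_prodMk t) (hL.preimage_prodMk u)
    _ ≤ _ := by gcongr; exact hslice t u

theorem MeasureTheory.MeasurePreserving.isMidpointLogConcave {μ : Measure E} {ν : Measure F}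
    {e : E ≃L[ℝ] F} (he : MeasurePreserving e μ ν) (hμ : IsMidpointLogConcave μ) :
    IsMidpointLogConcave ν := by
  intro K L hK hL
  have hpre {S : Set F} (hS : IsCompact S) : ν S = μ (e.symm '' S) := by
    rw [e.image_symm_eq_preimage, he.measure_preimage hS.measurableSet.nullMeasurableSet]
  rw [hpre hK, hpre hL, hpre ((hK.add hL).smul _), image_smul_set, image_add]
  exact hμ _ _ (hK.image e.symm.continuous) (hL.image e.symm.continuous)

theorem isMidpointLogConcave_volume_pi (n : ℕ) :
    IsMidpointLogConcave (volume : Measure (Fin n → ℝ)) := by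
  induction n with
  | zero => exact isMidpointLogConcave_of_subsingleton _
  | succ n ih =>
    have he : MeasurePreserving (Fin.consEquivL ℝ (fun _ : Fin (n + 1) => ℝ))
        ((volume : Measure ℝ).prod volume) volume := by
      have hcons : ⇑(Fin.consEquivL ℝ (fun _ : Fin (n + 1) => ℝ)) =
          (MeasurableEquiv.piFinSuccAbove (fun _ : Fin (n + 1) => ℝ) 0).symm := by
        funext p; ext i; refine Fin.cases ?_ ?_ i <;> simp [MeasurableEquiv.piFinSuccAbove]
      rw [hcons]
      exact (volume_preserving_piFinSuccAbove (fun _ : Fin (n + 1) => ℝ) 0).symm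
    exact he.isMidpointLogConcave ih.prod

theorem isMidpointLogConcave_volume_euclideanSpace (n : ℕ) :
    IsMidpointLogConcave (volume : Measure (EuclideanSpace ℝ (Fin n))) :=
  (PiLp.volume_preserving_toLp (Fin n)).isMidpointLogConcave
    (e := (PiLp.continuousLinearEquiv 2 ℝ _).symm) (isMidpointLogConcave_volume_pi n)

theorem IsMidpointLogConcave.measure_le_measure_inv_two_smul_sub_self [BorelSpace E]
    {μ : Measure E} [μ.IsNegInvariant] (hμ : IsMidpointLogConcave μ) {K : Set E}
    (hK : IsCompact K) : μ K ≤ μ ((2⁻¹ : ℝ) • (K - K)) := by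
  have := hμ K (-K) hK hK.neg
  rwa [Measure.measure_neg, ← sq, ← sub_eq_add_neg, ENNReal.pow_le_pow_left_iff two_ne_zero]
    at this

theorem IsMidpointLogConcave.measure_le_measure_ball [BorelSpace E] {μ : Measure E}
    [μ.IsNegInvariant] [μ.InnerRegular] (hμ : IsMidpointLogConcave μ) {S : Set E}
    (hS : MeasurableSet S) {r : ℝ} (hSr : ∀ x ∈ S, ∀ y ∈ S, dist x y < r) :
    μ S ≤ μ (ball 0 (r / 2)) := by
  rw [hS.measure_eq_iSup_isCompact]
  refine iSup₂_le fun K hKS => iSup_le fun hK =>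
    (hμ.measure_le_measure_inv_two_smul_sub_self hK).trans (measure_mono ?_)
  rintro _ ⟨_, ⟨x, hx, y, hy, rfl⟩, rfl⟩
  rw [mem_ball_zero_iff, norm_smul, ← dist_eq_norm, Real.norm_of_nonneg (by norm_num)]
  linarith [hSr x (hKS hx) y (hKS hy)]

end

theorem IsPreconnected.forall_dist_lt {X : Type*} [PseudoMetricSpace X] {C : Set X}
    (hC : IsPreconnected C) {p u : X} {r : ℝ} (hr : ∀ z ∈ C, dist p z ≠ r) (hu : u ∈ C)
    (hpu : dist p u < r) : ∀ w ∈ C, dist p w < r := by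
  intro w hw
  by_contra! hle
  obtain ⟨z, hz, hpz⟩ := hC.intermediate_value hu hw
    (continuous_const.dist continuous_id).continuousOn ⟨hpu.le, hle⟩
  exact hr z hz hpz

theorem IsPreconnected.forall_dist_lt_of_union {X : Type*} [PseudoMetricSpace X]
    {C₁ C₂ : Set X} (h₁ : IsPreconnected C₁) (h₂ : IsPreconnected C₂) {r : ℝ}
    (hr : ∀ x ∈ C₁ ∪ C₂, ∀ y ∈ C₁ ∪ C₂, dist x y ≠ r) {a b : X} (ha : a ∈ C₁) (hb : b ∈ C₂)
    (hab : dist a b < r) : ∀ x ∈ C₁ ∪ C₂, ∀ y ∈ C₁ ∪ C₂, dist x y < r := by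
  have hr₀ : 0 < r := dist_nonneg.trans_lt hab
  have near {p : X} (hp : p ∈ C₁ ∪ C₂) {C : Set X} (hC : IsPreconnected C) (hCS : C ⊆ C₁ ∪ C₂)
      {u : X} (hu : u ∈ C) (hpu : dist p u < r) : ∀ w ∈ C, dist p w < r :=
    hC.forall_dist_lt (fun z hz => hr p hp z (hCS hz)) hu hpu
  have ha' : ∀ y ∈ C₁ ∪ C₂, dist a y < r := by
    rintro y (hy | hy)
    · exact near (.inl ha) h₁ subset_union_left ha (by simpa using hr₀) y hy
    · exact near (.inl ha) h₂ subset_union_right hb hab y hy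
  have hb' : ∀ y ∈ C₁ ∪ C₂, dist b y < r := by
    rintro y (hy | hy)
    · exact near (.inr hb) h₁ subset_union_left ha (dist_comm a b ▸ hab) y hy
    · exact near (.inr hb) h₂ subset_union_right hb (by simpa using hr₀) y hy
  rintro x hx y (hy | hy)
  · exact near hx h₁ subset_union_left ha (dist_comm a x ▸ ha' x hx) y hy
  · exact near hx h₂ subset_union_right hb (dist_comm b x ▸ hb' x hx) y hy

theorem exists_dist_lt_of_setDist_lt {X : Type*} [PseudoMetricSpace X] {A B : Set X}
    (hA : A.Nonempty) (hB : B.Nonempty) {r : ℝ} (h : setDist A B < r) :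
    ∃ a ∈ A, ∃ b ∈ B, dist a b < r := by
  obtain ⟨a, ha⟩ := hA
  obtain ⟨b, hb⟩ := hB
  obtain ⟨_, ⟨a', ha', b', hb', rfl⟩, hlt⟩ :=
    exists_lt_of_csInf_lt (s := {r | ∃ x ∈ A, ∃ y ∈ B, r = dist x y}) ⟨_, a, ha, b, hb, rfl⟩ h
  exact ⟨a', ha', b', hb', hlt⟩

theorem components_with_large_volume_are_far_apart_general
    (d : ℕ) (P : Set (EuclideanSpace ℝ (Fin d))) (hP : IsOpen P)
    (havoid : ∀ x ∈ P, ∀ y ∈ P, ∀ n : ℕ, 0 < n → dist x y ≠ n)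
    (x y : EuclideanSpace ℝ (Fin d)) (hx : x ∈ P) (hy : y ∈ P)
    (hvol : volume (ball (0 : EuclideanSpace ℝ (Fin d)) (1/2)) <
      volume (connectedComponentIn P x ∪ connectedComponentIn P y)) :
    1 ≤ setDist (connectedComponentIn P x) (connectedComponentIn P y) := by
  by_contra! hlt
  obtain ⟨a, ha, b, hb, hab⟩ := exists_dist_lt_of_setDist_lt
    ⟨x, mem_connectedComponentIn hx⟩ ⟨y, mem_connectedComponentIn hy⟩ hlt
  have hS : connectedComponentIn P x ∪ connectedComponentIn P y ⊆ P :=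
    union_subset (connectedComponentIn_subset P x) (connectedComponentIn_subset P y)
  have hdiam := isPreconnected_connectedComponentIn.forall_dist_lt_of_union
    isPreconnected_connectedComponentIn
    (fun u hu v hv => by simpa using havoid u (hS hu) v (hS hv) 1 one_pos) ha hb hab
  exact hvol.not_ge <| (isMidpointLogConcave_volume_euclideanSpace d).measure_le_measure_ball
    (hP.connectedComponentIn.union hP.connectedComponentIn).measurableSet hdiam

theorem components_with_large_volume_are_far_apart
    (d : ℕ) (P : Set (EuclideanSpace ℝ (Fin d))) (hP : IsOpen P)
    (havoid : ∀ x ∈ P, ∀ y ∈ P, ∀ n : ℕ, 0 < n → dist x y ≠ n)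
    (x y : EuclideanSpace ℝ (Fin d)) (hx : x ∈ P) (hy : y ∈ P)
    (hne : connectedComponentIn P x ≠ connectedComponentIn P y)
    (hvol : volume (ball (0 : EuclideanSpace ℝ (Fin d)) (1/2)) <
      volume (connectedComponentIn P x ∪ connectedComponentIn P y)) :
    1 ≤ setDist (connectedComponentIn P x) (connectedComponentIn P y) :=
  components_with_large_volume_are_far_apart_general d P hP havoid x y hx hy hvol
end

section
/- Suppose that for every open set P ⊆ ℝ^d with exactly n connected components, each of diameter at most 1, and with no pair of points at positive integer distance, one has λ_d(P) ≤ Λ. Then for every integer k ≥ n, every such open set with exactly k connected components satisfies λ_d(P) ≤ (k/n)·Λ. -/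
open Metric MeasureTheory

/-!
Any `n` of the `k` components of `P` form an open set of the same kind, whose components are
exactly the chosen ones, so any `n` components have total volume at most `Λ`. Averaging over the
`n`-element subfamilies gives `n · λ_d(P) ≤ k · Λ`; the averaging is done by induction on `k`,
deleting one component at a time, each component being deleted from exactly one of the `k`
subfamilies of size `k - 1`.
-/

section Averaging

open Finset

theorem Finset.sum_sum_erase {α M : Type*} [AddCommMonoid M] [DecidableEq α] (s : Finset α)
    (f : α → M) : ∑ a ∈ s, ∑ b ∈ s.erase a, f b = (#s - 1) • ∑ b ∈ s, f b := by
  rw [sum_comm' (t' := s) (s' := fun b ↦ s.erase b) fun a b ↦ by simp only [mem_erase]; tauto,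
    smul_sum]
  exact sum_congr rfl fun b hb ↦ by rw [sum_const, card_erase_of_mem hb]

theorem ENNReal.mul_sum_le_card_mul_of_forall_card_eq {α : Type*} (f : α → ENNReal) {n : ℕ}
    {Λ : ENNReal} (s : Finset α) (hs : n ≤ #s)
    (h : ∀ t ⊆ s, #t = n → ∑ a ∈ t, f a ≤ Λ) : n * ∑ a ∈ s, f a ≤ #s * Λ := by
  classical
  rcases Nat.eq_zero_or_pos n with rfl | hn
  · simp
  induction s using Finset.strongInduction with | H s ih => ?_
  rcases hs.eq_or_lt with rfl | hlt
  · exact mul_le_mul_right (h s subset_rfl rfl) _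
  have herase : ∀ a ∈ s, n * ∑ b ∈ s.erase a, f b ≤ (#s - 1 : ℕ) * Λ := fun a ha ↦ by
    rw [← card_erase_of_mem ha]
    exact ih _ (erase_ssubset ha) (by rw [card_erase_of_mem ha]; omega)
      fun t ht ↦ h t (ht.trans (erase_subset a s))
  have hm : ((#s - 1 : ℕ) : ENNReal) ≠ 0 := by exact_mod_cast (by omega : #s - 1 ≠ 0)
  refine (ENNReal.mul_le_mul_iff_right hm (ENNReal.natCast_ne_top _)).1 ?_
  calc ((#s - 1 : ℕ) : ENNReal) * (n * ∑ a ∈ s, f a)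
      = ∑ a ∈ s, n * ∑ b ∈ s.erase a, f b := by
        rw [← mul_sum, sum_sum_erase, nsmul_eq_mul]; ring
    _ ≤ ∑ _a ∈ s, (#s - 1 : ℕ) * Λ := sum_le_sum herase
    _ = (#s - 1 : ℕ) * (#s * Λ) := by rw [sum_const, nsmul_eq_mul]; ring

end Averaging

section ConnectedComponentsIn

variable {X : Type*} [TopologicalSpace X] {P C : Set X} {S : Set (Set X)} {x : X}

def connectedComponentsIn (P : Set X) : Set (Set X) :=
  {C | ∃ x ∈ P, C = connectedComponentIn P x}

theorem connectedComponentIn_eq_of_mem_connectedComponentsIn (hC : C ∈ connectedComponentsIn P)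
    (hx : x ∈ C) : connectedComponentIn P x = C := by
  obtain ⟨y, -, rfl⟩ := hC
  exact (connectedComponentIn_eq hx).symm

theorem connectedComponentsIn_pairwiseDisjoint : (connectedComponentsIn P).PairwiseDisjoint id :=
  fun _ hC _ hD hCD ↦ Set.disjoint_left.2 fun _ hxC hxD ↦ hCD <|
    (connectedComponentIn_eq_of_mem_connectedComponentsIn hC hxC).symm.trans
      (connectedComponentIn_eq_of_mem_connectedComponentsIn hD hxD)

theorem sUnion_connectedComponentsIn (P : Set X) : ⋃₀ connectedComponentsIn P = P := by
  refine subset_antisymm (Set.sUnion_subset ?_)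
    fun x hx ↦ ⟨_, ⟨x, hx, rfl⟩, mem_connectedComponentIn hx⟩
  rintro C ⟨x, -, rfl⟩
  exact connectedComponentIn_subset P x

theorem sUnion_subset_of_subset_connectedComponentsIn (hS : S ⊆ connectedComponentsIn P) :
    ⋃₀ S ⊆ P :=
  (Set.sUnion_mono hS).trans (sUnion_connectedComponentsIn P).le

theorem connectedComponentIn_sUnion_of_subset (hS : S ⊆ connectedComponentsIn P)
    (hx : x ∈ ⋃₀ S) : connectedComponentIn (⋃₀ S) x = connectedComponentIn P x := by
  have hSP := sUnion_subset_of_subset_connectedComponentsIn hS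
  refine (connectedComponentIn_mono x hSP).antisymm <|
    isPreconnected_connectedComponentIn.subset_connectedComponentIn
      (mem_connectedComponentIn (hSP hx)) ?_
  obtain ⟨C, hCS, hxC⟩ := hx
  rw [connectedComponentIn_eq_of_mem_connectedComponentsIn (hS hCS) hxC]
  exact Set.subset_sUnion_of_mem hCS

theorem connectedComponentsIn_sUnion_of_subset (hS : S ⊆ connectedComponentsIn P) :
    connectedComponentsIn (⋃₀ S) = S := by
  ext C
  constructor
  · rintro ⟨x, hx, rfl⟩
    rw [connectedComponentIn_sUnion_of_subset hS hx]
    obtain ⟨D, hDS, hxD⟩ := hx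
    rwa [connectedComponentIn_eq_of_mem_connectedComponentsIn (hS hDS) hxD]
  · intro hCS
    obtain ⟨x, hxP, rfl⟩ := hS hCS
    have hx : x ∈ ⋃₀ S := ⟨_, hCS, mem_connectedComponentIn hxP⟩
    exact ⟨x, hx, (connectedComponentIn_sUnion_of_subset hS hx).symm⟩

theorem IsOpen.of_mem_connectedComponentsIn [LocallyConnectedSpace X] (hP : IsOpen P)
    (hC : C ∈ connectedComponentsIn P) : IsOpen C := by
  obtain ⟨x, -, rfl⟩ := hC
  exact hP.connectedComponentIn

theorem measure_sUnion_of_subset_connectedComponentsIn [LocallyConnectedSpace X]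
    [MeasurableSpace X] [OpensMeasurableSpace X] (μ : Measure X) (hP : IsOpen P)
    {S : Finset (Set X)} (hS : ↑S ⊆ connectedComponentsIn P) : μ (⋃₀ ↑S) = ∑ C ∈ S, μ C := by
  rw [Set.sUnion_eq_biUnion]
  exact measure_biUnion_finset (connectedComponentsIn_pairwiseDisjoint.subset hS)
    fun C hC ↦ (hP.of_mem_connectedComponentsIn (hS hC)).measurableSet

end ConnectedComponentsIn

theorem averaging_upper_bound
    (d n : ℕ) (hn : 1 ≤ n) (Λ : ENNReal)
    (H : ∀ P : Set (EuclideanSpace ℝ (Fin d)), IsOpen P →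
      {C | ∃ x ∈ P, C = connectedComponentIn P x}.ncard = n →
      (∀ x ∈ P, Metric.diam (connectedComponentIn P x) ≤ 1) →
      (∀ x ∈ P, ∀ y ∈ P, ∀ m : ℕ, 0 < m → dist x y ≠ m) →
      volume P ≤ Λ) :
    ∀ k : ℕ, n ≤ k → ∀ P : Set (EuclideanSpace ℝ (Fin d)), IsOpen P →
      {C | ∃ x ∈ P, C = connectedComponentIn P x}.ncard = k →
      (∀ x ∈ P, Metric.diam (connectedComponentIn P x) ≤ 1) →
      (∀ x ∈ P, ∀ y ∈ P, ∀ m : ℕ, 0 < m → dist x y ≠ m) →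
      volume P ≤ ((k : ENNReal) / (n : ENNReal)) * Λ := by
  intro k hk P hP hcard hdiam hdist
  change (connectedComponentsIn P).ncard = k at hcard
  have hfin : (connectedComponentsIn P).Finite := Set.finite_of_ncard_pos (by omega)
  have hsubfamily : ∀ S ⊆ hfin.toFinset, S.card = n → ∑ C ∈ S, volume C ≤ Λ := by
    intro S hSF hSn
    have hS : ↑S ⊆ connectedComponentsIn P := hfin.subset_toFinset.1 hSF
    have hSP := sUnion_subset_of_subset_connectedComponentsIn hS
    rw [← measure_sUnion_of_subset_connectedComponentsIn volume hP hS]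
    refine H _ (isOpen_sUnion fun C hC ↦ hP.of_mem_connectedComponentsIn (hS hC)) ?_ ?_
      fun x hx y hy ↦ hdist x (hSP hx) y (hSP hy)
    · change (connectedComponentsIn _).ncard = n
      rw [connectedComponentsIn_sUnion_of_subset hS, Set.ncard_coe_finset, hSn]
    · intro x hx
      rw [connectedComponentIn_sUnion_of_subset hS hx]
      exact hdiam x (hSP hx)
  have hvol : volume P = ∑ C ∈ hfin.toFinset, volume C := by
    rw [← measure_sUnion_of_subset_connectedComponentsIn volume hP hfin.coe_toFinset.le,
      hfin.coe_toFinset, sUnion_connectedComponentsIn]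
  have hk' : hfin.toFinset.card = k := by rw [← Set.ncard_eq_toFinset_card _ hfin, hcard]
  have key := ENNReal.mul_sum_le_card_mul_of_forall_card_eq (fun C ↦ volume C) _
    (hk' ▸ hk) hsubfamily
  rw [hk', ← hvol] at key
  rw [← ENNReal.mul_div_right_comm,
    ENNReal.le_div_iff_mul_le (.inl (Nat.cast_ne_zero.2 (by omega)))
      (.inl (ENNReal.natCast_ne_top n)), mul_comm]
  exact key
end

section
/- Let p be an odd prime and set α_j := 2·sin(jπ/p) for j = 1, …, (p-1)/2. Then the real numbers α_1, …, α_{(p-1)/2} are linearly independent over ℚ (in particular each α_j is irrational). -/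
/-!
Let `ζ = exp (π i / (2p))`, a primitive `4p`-th root of unity. Then `i · 2 sin (jπ/p) =
ζ ^ (2j) + ζ ^ (2p - 2j)` and `i · 1 = ζ ^ p`. Since `ζ` has degree `φ(4p) = 2p - 2` over `ℚ`,
the powers `ζ ^ 1, …, ζ ^ (2p - 2)` are `ℚ`-linearly independent, and for `1 ≤ j ≤ (p - 1)/2`
the exponents above are pairwise distinct elements of `[1, 2p - 2]`. Hence `1, α₁, …, α_{(p-1)/2}`
are `ℚ`-linearly independent, which gives both the independence and the irrationality.
-/

open Complex Function
open scoped Real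

section

variable {ι κ R M : Type*} [Ring R] [AddCommGroup M] [Module R M]

theorem LinearIndepOn.linearIndependent_sum_of_pairwise_disjoint {v : ι → M} {t : Set ι}
    (hv : LinearIndepOn R v t) (s : κ → Finset ι) (hst : ∀ k, ↑(s k) ⊆ t)
    (hdisj : Pairwise (Disjoint on s)) (hne : ∀ k, (s k).Nonempty) :
    LinearIndependent R fun k => ∑ i ∈ s k, v i := by
  rw [linearIndependent_iff']
  intro u g hg k hk
  have hinj : Set.InjOn Sigma.snd (u.sigma s : Set (Σ _ : κ, ι)) := by
    rintro ⟨k, i⟩ hi ⟨k', i'⟩ hi' (rfl : i = i')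
    simp only [Finset.coe_sigma, Set.mem_sigma_iff, Finset.mem_coe] at hi hi'
    obtain rfl : k = k' := by_contra fun hkk' =>
      Finset.disjoint_left.mp (hdisj hkk') hi.2 hi'.2
    rfl
  have himage : Sigma.snd '' (u.sigma s : Set (Σ _ : κ, ι)) ⊆ t := by
    rintro _ ⟨⟨k, i⟩, hi, rfl⟩
    exact hst k (Finset.mem_sigma.mp hi).2
  have hsigma : LinearIndepOn R (v ∘ Sigma.snd) (u.sigma s : Set (Σ _ : κ, ι)) :=
    (hv.mono himage).comp_of_image hinj
  obtain ⟨i, hi⟩ := hne k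
  refine linearIndepOn_finset_iff.mp hsigma (fun x => g x.1) ?_ ⟨k, i⟩ (by simp [hk, hi])
  simpa [Finset.sum_sigma, Finset.smul_sum] using hg

end

theorem linearIndepOn_pow_Ico {K L : Type*} [Field K] [Field L] [Algebra K L] {x : L}
    (hx : x ≠ 0) (a : ℕ) :
    LinearIndepOn K (x ^ ·) (Set.Ico a (a + (minpoly K x).natDegree)) := by
  have hrange : Set.Ico a (a + (minpoly K x).natDegree) =
      Set.range fun i : Fin (minpoly K x).natDegree => a + (i : ℕ) := by
    ext n
    exact ⟨fun h => ⟨⟨n - a, by grind⟩, by grind⟩, by grind⟩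
  have hmul : LinearMap.ker (LinearMap.mulLeft K (x ^ a)) = ⊥ :=
    LinearMap.ker_eq_bot.mpr (mul_right_injective₀ (pow_ne_zero a hx))
  rw [hrange, linearIndepOn_range_iff (fun i j h => Fin.ext (by simpa using h))]
  simpa [Function.comp_def, pow_add] using (linearIndependent_pow x).map' _ hmul

theorem IsPrimitiveRoot.natDegree_minpoly_rat {K : Type*} [Field K] [CharZero K] {μ : K} {n : ℕ}
    (h : IsPrimitiveRoot μ n) (hn : 0 < n) : (minpoly ℚ μ).natDegree = n.totient := by
  rw [← Polynomial.cyclotomic_eq_minpoly_rat h hn, Polynomial.natDegree_cyclotomic]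

theorem Nat.totient_four_mul_of_prime_ne_two {p : ℕ} (hp : p.Prime) (hp2 : p ≠ 2) :
    (4 * p).totient = 2 * (p - 1) := by
  have hcop : Nat.Coprime 4 p :=
    Nat.Coprime.pow_left 2 ((Nat.coprime_primes Nat.prime_two hp).mpr hp2.symm)
  rw [Nat.totient_mul hcop, Nat.totient_prime hp, show Nat.totient 4 = 2 by decide]

namespace Complex

theorem I_mul_two_mul_sin (θ : ℂ) : I * (2 * sin θ) = exp (θ * I) + exp ((π - θ) * I) := by
  rw [two_sin, show ((π : ℂ) - θ) * I = π * I + -θ * I by ring, exp_add, exp_pi_mul_I]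
  linear_combination (exp (-θ * I) - exp (θ * I)) * I_sq

theorem isPrimitiveRoot_exp_pi_mul_I_div (n : ℕ) (hn : n ≠ 0) :
    IsPrimitiveRoot (exp (π * I / n)) (2 * n) := by
  convert isPrimitiveRoot_exp (2 * n) (by omega) using 2
  push_cast
  field_simp

theorem exp_pi_mul_I_div_two_mul_pow_self {n : ℕ} (hn : n ≠ 0) :
    exp (π * I / (2 * n)) ^ n = I := by
  rw [← exp_nat_mul, show (n : ℂ) * (π * I / (2 * n)) = π / 2 * I by field_simp,
    exp_pi_div_two_mul_I]

theorem I_mul_two_mul_sin_eq_pow_add_pow {n : ℕ} (hn : n ≠ 0) {j : ℕ} (hj : j ≤ n) :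
    I * (2 * sin (j * π / n)) =
      exp (π * I / (2 * n)) ^ (2 * j) + exp (π * I / (2 * n)) ^ (2 * n - 2 * j) := by
  rw [I_mul_two_mul_sin, ← exp_nat_mul, ← exp_nat_mul, Nat.cast_sub (by omega)]
  congr 2 <;> push_cast <;> field_simp

end Complex

def diagonalExponents (p : ℕ) : Option (Fin ((p - 1) / 2)) → Finset ℕ
  | none => {p}
  | some j => {2 * ((j : ℕ) + 1), 2 * p - 2 * ((j : ℕ) + 1)}

theorem coe_diagonalExponents_subset_Ico {p : ℕ} (hp : 3 ≤ p) (o : Option (Fin ((p - 1) / 2))) :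
    ↑(diagonalExponents p o) ⊆ Set.Ico 1 (1 + 2 * (p - 1)) := by
  intro i hi
  rcases o with _ | j
  · simp only [diagonalExponents, Finset.coe_singleton, Set.mem_singleton_iff] at hi
    simp only [Set.mem_Ico]
    omega
  · have hj := j.2
    simp only [diagonalExponents, Finset.coe_insert, Finset.coe_singleton, Set.mem_insert_iff,
      Set.mem_singleton_iff] at hi
    simp only [Set.mem_Ico]
    omega

theorem pairwise_disjoint_diagonalExponents (p : ℕ) :
    Pairwise (Disjoint on diagonalExponents p) := by
  rintro (_ | j) (_ | k) hjk
  · exact absurd rfl hjk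
  · have hk := k.2
    simp only [diagonalExponents, onFun, Finset.disjoint_singleton_left, Finset.mem_insert,
      Finset.mem_singleton, not_or]
    omega
  · have hj := j.2
    simp only [diagonalExponents, onFun, Finset.disjoint_singleton_right, Finset.mem_insert,
      Finset.mem_singleton, not_or]
    omega
  · have hj := j.2
    have hk := k.2
    have : (j : ℕ) ≠ k := fun h => hjk (congrArg some (Fin.ext h))
    simp only [diagonalExponents, onFun, Finset.disjoint_insert_right, Finset.mem_insert,
      Finset.mem_singleton, Finset.disjoint_singleton_right, not_or]
    omega

theorem I_mul_elim_one_two_mul_sin_eq_sum_diagonalExponents {p : ℕ} (hp : p ≠ 0)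
    (o : Option (Fin ((p - 1) / 2))) :
    I * ((o.elim 1 fun j => 2 * Real.sin (((j : ℕ) + 1) * π / p) : ℝ) : ℂ) =
      ∑ k ∈ diagonalExponents p o, exp (π * I / (2 * p)) ^ k := by
  rcases o with _ | j
  · simpa [diagonalExponents] using (exp_pi_mul_I_div_two_mul_pow_self hp).symm
  · have hj := j.2
    have hsin := I_mul_two_mul_sin_eq_pow_add_pow hp (j := j + 1) (by omega)
    push_cast at hsin
    simpa [diagonalExponents,
      Finset.sum_pair (show 2 * ((j : ℕ) + 1) ≠ 2 * p - 2 * ((j : ℕ) + 1) by omega)] using hsin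

theorem linearIndependent_one_and_two_mul_sin {p : ℕ} (hp : p.Prime) (hp2 : p ≠ 2) :
    LinearIndependent ℚ fun o : Option (Fin ((p - 1) / 2)) =>
      o.elim 1 fun j => 2 * Real.sin (((j : ℕ) + 1) * π / p) := by
  have hp3 : 3 ≤ p := lt_of_le_of_ne hp.two_le (Ne.symm hp2)
  have hζ : IsPrimitiveRoot (exp (π * I / (2 * p))) (4 * p) := by
    rw [show 4 * p = 2 * (2 * p) by ring]
    convert isPrimitiveRoot_exp_pi_mul_I_div (2 * p) (by omega) using 3
    push_cast
    ring
  have hpow := linearIndepOn_pow_Ico (K := ℚ) (exp_ne_zero (π * I / (2 * p))) 1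
  rw [hζ.natDegree_minpoly_rat (by omega), Nat.totient_four_mul_of_prime_ne_two hp hp2] at hpow
  have hsum := hpow.linearIndependent_sum_of_pairwise_disjoint (diagonalExponents p)
    (coe_diagonalExponents_subset_Ico hp3) (pairwise_disjoint_diagonalExponents p)
    (by rintro (_ | j) <;> simp [diagonalExponents])
  refine .of_comp ((LinearMap.mulLeft ℚ I) ∘ₗ (Algebra.linearMap ℝ ℂ).restrictScalars ℚ) ?_
  rw [show _ ∘ _ = fun o => ∑ k ∈ diagonalExponents p o, exp (π * I / (2 * p)) ^ k from
    funext fun o => ?_]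
  · exact hsum
  exact I_mul_elim_one_two_mul_sin_eq_sum_diagonalExponents hp.ne_zero o

theorem irrational_of_notMem_span_one {x : ℝ} (hx : x ∉ Submodule.span ℚ {1}) : Irrational x := by
  rintro ⟨q, rfl⟩
  exact hx (Submodule.mem_span_singleton.mpr ⟨q, by simp⟩)

theorem diagonals_of_regular_p_gon_rationally_independent
    (p : ℕ) (hp : p.Prime) (hodd : Odd p) :
    (∀ j : Fin ((p - 1) / 2), Irrational (2 * Real.sin (((j : ℕ) + 1) * Real.pi / p))) ∧
    LinearIndependent ℚ (fun j : Fin ((p - 1) / 2) =>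
      2 * Real.sin (((j : ℕ) + 1) * Real.pi / p)) := by
  have h := linearIndependent_one_and_two_mul_sin hp (by rintro rfl; norm_num at hodd)
  refine ⟨fun j => irrational_of_notMem_span_one ?_, h.comp some (Option.some_injective _)⟩
  simpa using h.notMem_span_image (s := {none}) (x := some j) (by simp)
end

section
/- For every ε ∈ (0, 1) and every integer n ≥ 1 there exists an open set P ⊆ ℝ^d with exactly n connected components, each an open ball of diameter less than 1, such that P contains no pair of points at positive integer distance, every line meets P in a set of total length at most 1, and λ_d(P) > (1-ε)·λ_d(B_d). Consequently f°_d(n) = l°_d(n) = λ_d(B_d) whenever n ≤ 2^d (d ≥ 2), where B_d is the d-dimensional ball of diameter 1. -/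
open Metric MeasureTheory

/-- `P` contains no pair of points at positive integer distance. -/
def AvoidsIntegralDistances {d : ℕ} (P : Set (EuclideanSpace ℝ (Fin d))) : Prop :=
  ∀ x ∈ P, ∀ y ∈ P, ∀ n : ℕ, 0 < n → dist x y ≠ n

/-- every line meets `P` in a set of total length at most `1`. -/
def LineCondition {d : ℕ} (P : Set (EuclideanSpace ℝ (Fin d))) : Prop :=
  ∀ p v : EuclideanSpace ℝ (Fin d), ‖v‖ = 1 → volume {t : ℝ | p + t • v ∈ P} ≤ 1

/-- `P` is a disjoint union of `n` open balls. -/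
def IsBallUnion {d : ℕ} (n : ℕ) (P : Set (EuclideanSpace ℝ (Fin d))) : Prop :=
  ∃ c : Fin n → EuclideanSpace ℝ (Fin d), ∃ r : Fin n → ℝ, (∀ i, 0 < r i) ∧
    (Pairwise fun i j => Disjoint (ball (c i) (r i)) (ball (c j) (r j))) ∧
    P = ⋃ i, ball (c i) (r i)

/-- `f°_d(n)`: supremum of volumes of disjoint unions of `n` open balls avoiding
integral distances. -/
noncomputable def fCirc (d n : ℕ) : ENNReal :=
  sSup {μ | ∃ P : Set (EuclideanSpace ℝ (Fin d)),
    IsBallUnion n P ∧ AvoidsIntegralDistances P ∧ μ = volume P}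

/-- `l°_d(n)`: supremum of volumes of disjoint unions of `n` open balls whose
intersection with every line has total length at most `1`. -/
noncomputable def lCirc (d n : ℕ) : ENNReal :=
  sSup {μ | ∃ P : Set (EuclideanSpace ℝ (Fin d)),
    IsBallUnion n P ∧ LineCondition P ∧ μ = volume P}

/-! Both conditions force every ball inside `P` to have diameter at most `1`, and any two
disjoint balls inside `P` to have total diameter at most `1`. The differences `y - x` of points of
`B(c₁, r₁)` and `B(c₂, r₂)` fill the ball `B(c₂ - c₁, r₁ + r₂)`, whose norms cover an interval of
length `2 (r₁ + r₂)` in `[0, ∞)` and so hit a positive integer once `r₁ + r₂ > 1/2`; and the line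
through the two centres meets `P` in two disjoint intervals of lengths `2 r₁` and `2 r₂`.

For `n ≤ 2^d`, radii with `rᵢ ≤ 1/2` and `rᵢ + rⱼ ≤ 1/2` satisfy `∑ rᵢ^d ≤ (1/2)^d`: if the
largest radius `M` exceeds `1/4`, the other at most `2^d - 1` radii are at most `t = 1/2 - M ≤ M`,
and `(M + t)^d - M^d ≥ (2t)^d - t^d` by comparing the two geometric sums. So the volume is at most
that of the ball of diameter `1`.

Conversely, a ball of radius `R < 1/2` about the origin followed by `n - 1` small balls strung
along a ray in the annulus `R < ‖x‖ < 1/2` lies in the ball of diameter `1`, so it satisfies both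
conditions trivially, and its volume tends to that of the ball of diameter `1` as `R → 1/2`. -/

section LineGeometry

variable {E : Type*} [NormedAddCommGroup E] [NormedSpace ℝ E]

lemma dist_add_smul_add_smul {v : E} (hv : ‖v‖ = 1) (p : E) (s t : ℝ) :
    dist (p + s • v) (p + t • v) = dist s t := by
  rw [dist_eq_norm, add_sub_add_left_eq_sub, ← sub_smul, norm_smul, hv, mul_one, Real.dist_eq,
    Real.norm_eq_abs]

lemma isometry_add_smul {v : E} (hv : ‖v‖ = 1) (p : E) : Isometry fun t : ℝ => p + t • v :=
  Isometry.of_dist_eq (dist_add_smul_add_smul hv p)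

lemma exists_mem_ball_norm_eq [Nontrivial E] {z : E} {ρ k : ℝ} (hk : 0 ≤ k)
    (h : |k - ‖z‖| < ρ) : ∃ w ∈ ball z ρ, ‖w‖ = k := by
  rcases eq_or_ne z 0 with rfl | hz
  · obtain ⟨w, hw⟩ := exists_norm_eq E hk
    refine ⟨w, ?_, hw⟩
    simpa [hw, abs_of_nonneg hk] using h
  · have hz' : 0 < ‖z‖ := norm_pos_iff.2 hz
    refine ⟨(k / ‖z‖) • z, ?_, ?_⟩
    · rw [mem_ball, dist_eq_norm,
        show (k / ‖z‖) • z - z = (k / ‖z‖ - 1) • z by rw [sub_smul, one_smul]]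
      calc ‖(k / ‖z‖ - 1) • z‖ = |(k / ‖z‖ - 1) * ‖z‖| := by
            rw [norm_smul, Real.norm_eq_abs, abs_mul, abs_norm]
        _ < ρ := by rwa [sub_mul, div_mul_cancel₀ _ hz'.ne', one_mul]
    · rw [norm_smul, Real.norm_eq_abs, abs_of_nonneg (div_nonneg hk hz'.le),
        div_mul_cancel₀ _ hz'.ne']

end LineGeometry

lemma exists_pos_nat_abs_sub_lt {x ρ : ℝ} (hρ : 1 / 2 < ρ) (hx : ρ ≤ x) :
    ∃ k : ℕ, 0 < k ∧ |(k : ℝ) - x| < ρ := by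
  refine ⟨⌊x - ρ⌋₊ + 1, Nat.succ_pos _, abs_lt.2 ⟨?_, ?_⟩⟩
  · push_cast
    linarith [Nat.lt_floor_add_one (x - ρ)]
  · push_cast
    linarith [Nat.floor_le (sub_nonneg.2 hx)]

def BallDiametersBounded {X : Type*} [PseudoMetricSpace X] (P : Set X) : Prop :=
  (∀ c a, 0 < a → ball c a ⊆ P → 2 * a ≤ 1) ∧
    ∀ c₁ c₂ a b, 0 < a → 0 < b → Disjoint (ball c₁ a) (ball c₂ b) →
      ball c₁ a ⊆ P → ball c₂ b ⊆ P → 2 * (a + b) ≤ 1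

section Euclidean

variable {d : ℕ}

lemma EuclideanSpace.nontrivial_of_pos (hd : 0 < d) : Nontrivial (EuclideanSpace ℝ (Fin d)) :=
  Module.nontrivial_of_finrank_pos (by rwa [finrank_euclideanSpace_fin])

lemma AvoidsIntegralDistances.norm_ne_of_mem_ball {P : Set (EuclideanSpace ℝ (Fin d))}
    (hP : AvoidsIntegralDistances P) {c₁ c₂ : EuclideanSpace ℝ (Fin d)} {a b : ℝ}
    (ha : 0 < a) (hb : 0 < b) (h₁ : ball c₁ a ⊆ P) (h₂ : ball c₂ b ⊆ P)
    {w : EuclideanSpace ℝ (Fin d)} (hw : w ∈ ball (c₂ - c₁) (b + a)) {k : ℕ} (hk : 0 < k) :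
    ‖w‖ ≠ k := by
  rw [← ball_sub_ball hb ha] at hw
  obtain ⟨y, hy, x, hx, rfl⟩ := hw
  rw [← dist_eq_norm]
  exact hP y (h₂ hy) x (h₁ hx) k hk

lemma AvoidsIntegralDistances.ballDiametersBounded (hd : 0 < d)
    {P : Set (EuclideanSpace ℝ (Fin d))} (hP : AvoidsIntegralDistances P) :
    BallDiametersBounded P := by
  have := EuclideanSpace.nontrivial_of_pos hd
  refine ⟨fun c a ha h => ?_, fun c₁ c₂ a b ha hb hdisj h₁ h₂ => ?_⟩
  · by_contra! hlt
    obtain ⟨w, hw, hw₁⟩ := exists_mem_ball_norm_eq (z := c - c) (ρ := a + a) zero_le_one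
      (by rw [sub_self, norm_zero, sub_zero, abs_one]; linarith)
    exact hP.norm_ne_of_mem_ball ha ha h h hw one_pos (by rw [hw₁, Nat.cast_one])
  · by_contra! hlt
    have hD : b + a ≤ ‖c₂ - c₁‖ := by
      rw [← dist_eq_norm, dist_comm]
      linarith [(disjoint_ball_ball_iff ha hb).1 hdisj]
    obtain ⟨k, hk, hkD⟩ := exists_pos_nat_abs_sub_lt (by linarith) hD
    obtain ⟨w, hw, hwk⟩ := exists_mem_ball_norm_eq k.cast_nonneg hkD
    exact hP.norm_ne_of_mem_ball ha hb h₁ h₂ hw hk hwk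

lemma LineCondition.volume_le {P : Set (EuclideanSpace ℝ (Fin d))} (hP : LineCondition P)
    {p v : EuclideanSpace ℝ (Fin d)} (hv : ‖v‖ = 1) {S : Set ℝ} (hS : ∀ t ∈ S, p + t • v ∈ P) :
    volume S ≤ 1 :=
  (measure_mono hS).trans (hP p v hv)

lemma LineCondition.ballDiametersBounded (hd : 0 < d)
    {P : Set (EuclideanSpace ℝ (Fin d))} (hP : LineCondition P) :
    BallDiametersBounded P := by
  have := EuclideanSpace.nontrivial_of_pos hd
  refine ⟨fun c a ha h => ?_, fun c₁ c₂ a b ha hb hdisj h₁ h₂ => ?_⟩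
  · obtain ⟨v, hv⟩ := exists_norm_eq (EuclideanSpace ℝ (Fin d)) zero_le_one
    have hS : ∀ t ∈ ball (0 : ℝ) a, c + t • v ∈ P := fun t ht => h (by
      simpa only [zero_smul, add_zero] using (isometry_add_smul hv c).mapsTo_ball 0 a ht)
    have := hP.volume_le hv hS
    rwa [Real.volume_ball, ENNReal.ofReal_le_one] at this
  · have hD : a + b ≤ dist c₁ c₂ := (disjoint_ball_ball_iff ha hb).1 hdisj
    have hne : c₂ - c₁ ≠ 0 := sub_ne_zero.2 fun h => by rw [h, dist_self] at hD; linarith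
    set v := ‖c₂ - c₁‖⁻¹ • (c₂ - c₁)
    have hv : ‖v‖ = 1 := norm_smul_inv_norm hne
    have hc₂ : c₁ + dist c₁ c₂ • v = c₂ := by
      rw [smul_smul, dist_comm, dist_eq_norm, mul_inv_cancel₀ (norm_ne_zero_iff.2 hne), one_smul,
        add_sub_cancel]
    have hf := isometry_add_smul hv c₁
    have hS : ∀ t ∈ ball (0 : ℝ) a ∪ ball (dist c₁ c₂) b, c₁ + t • v ∈ P := by
      rintro t (ht | ht)
      · exact h₁ (by simpa only [zero_smul, add_zero] using hf.mapsTo_ball 0 a ht)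
      · exact h₂ (hc₂ ▸ hf.mapsTo_ball _ b ht)
    have hdisj' : Disjoint (ball (0 : ℝ) a) (ball (dist c₁ c₂) b) :=
      ball_disjoint_ball (by rwa [dist_zero_left, Real.norm_eq_abs, abs_of_nonneg dist_nonneg])
    have := hP.volume_le hv hS
    rw [measure_union hdisj' measurableSet_ball, Real.volume_ball, Real.volume_ball,
      ← ENNReal.ofReal_add (by linarith) (by linarith), ENNReal.ofReal_le_one] at this
    linarith

end Euclidean

lemma pow_add_two_pow_sub_one_mul_pow_le {M t : ℝ} (ht : 0 ≤ t) (htM : t ≤ M) (d : ℕ) :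
    M ^ d + (2 ^ d - 1) * t ^ d ≤ (M + t) ^ d := by
  have key : (∑ i ∈ Finset.range d, (t + t) ^ i * t ^ (d - 1 - i)) * (t + t - t) ≤
      (∑ i ∈ Finset.range d, (M + t) ^ i * M ^ (d - 1 - i)) * (M + t - M) := by
    rw [add_sub_cancel_right, add_sub_cancel_left]
    gcongr
    exact pow_nonneg (by linarith) _
  rw [geom_sum₂_mul, geom_sum₂_mul, ← two_mul, mul_pow] at key
  linarith

lemma sum_pow_le_pow_of_add_le {ι : Type*} [Fintype ι] {d : ℕ} (hcard : Fintype.card ι ≤ 2 ^ d)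
    {r : ι → ℝ} {ρ : ℝ} (hρ : 0 ≤ ρ) (hr : ∀ i, 0 ≤ r i) (h₁ : ∀ i, r i ≤ ρ)
    (h₂ : Pairwise fun i j => r i + r j ≤ ρ) :
    ∑ i, r i ^ d ≤ ρ ^ d := by
  classical
  have hcard' : (Fintype.card ι : ℝ) ≤ 2 ^ d := by exact_mod_cast hcard
  rcases isEmpty_or_nonempty ι with hι | hι
  · simp only [Finset.univ_eq_empty, Finset.sum_empty]
    positivity
  obtain ⟨i₀, hi₀⟩ := Finite.exists_max r
  by_cases hM : r i₀ ≤ ρ / 2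
  · calc ∑ i, r i ^ d ≤ ∑ _i : ι, (ρ / 2) ^ d :=
          Finset.sum_le_sum fun i _ => pow_le_pow_left₀ (hr i) ((hi₀ i).trans hM) d
      _ = Fintype.card ι * (ρ / 2) ^ d := by rw [Finset.sum_const, nsmul_eq_mul, Finset.card_univ]
      _ ≤ 2 ^ d * (ρ / 2) ^ d := by gcongr
      _ = ρ ^ d := by rw [← mul_pow, mul_div_cancel₀ _ two_ne_zero]
  · set t := ρ - r i₀
    have hrest : ∑ j ∈ Finset.univ.erase i₀, r j ^ d ≤ (Fintype.card ι - 1) * t ^ d := by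
      calc ∑ j ∈ Finset.univ.erase i₀, r j ^ d ≤ ∑ _j ∈ Finset.univ.erase i₀, t ^ d :=
            Finset.sum_le_sum fun j hj => pow_le_pow_left₀ (hr j)
              (by linarith [h₂ (Finset.ne_of_mem_erase hj)]) d
        _ = (Fintype.card ι - 1) * t ^ d := by
            rw [Finset.sum_const, Finset.card_erase_of_mem (Finset.mem_univ i₀), nsmul_eq_mul,
              Finset.card_univ, Nat.cast_pred Fintype.card_pos]
    have hbin := pow_add_two_pow_sub_one_mul_pow_le (M := r i₀) (t := t)
      (by linarith [h₁ i₀]) (by linarith) d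
    rw [add_sub_cancel] at hbin
    have hcount : (Fintype.card ι - 1) * t ^ d ≤ (2 ^ d - 1) * t ^ d :=
      mul_le_mul_of_nonneg_right (by linarith) (pow_nonneg (by linarith [h₁ i₀]) d)
    rw [← Finset.add_sum_erase _ _ (Finset.mem_univ i₀)]
    linarith

lemma measure_iUnion_ball_le_of_add_le {E : Type*} [NormedAddCommGroup E] [NormedSpace ℝ E]
    [MeasurableSpace E] [BorelSpace E] [FiniteDimensional ℝ E] (μ : Measure E)
    [μ.IsAddHaarMeasure] {ι : Type*} [Fintype ι] (hcard : Fintype.card ι ≤ 2 ^ Module.finrank ℝ E)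
    (c : ι → E) {r : ι → ℝ} {ρ : ℝ} (hr : ∀ i, 0 < r i) (hρ : 0 < ρ) (h₁ : ∀ i, r i ≤ ρ)
    (h₂ : Pairwise fun i j => r i + r j ≤ ρ) :
    μ (⋃ i, ball (c i) (r i)) ≤ μ (ball 0 ρ) := by
  calc μ (⋃ i, ball (c i) (r i)) ≤ ∑ i, μ (ball (c i) (r i)) := measure_iUnion_fintype_le μ _
    _ = ENNReal.ofReal (∑ i, r i ^ Module.finrank ℝ E) * μ (ball 0 1) := by
        rw [ENNReal.ofReal_sum_of_nonneg fun i _ => pow_nonneg (hr i).le _, Finset.sum_mul]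
        exact Finset.sum_congr rfl fun i _ => μ.addHaar_ball_of_pos (c i) (hr i)
    _ ≤ ENNReal.ofReal (ρ ^ Module.finrank ℝ E) * μ (ball 0 1) := by
        gcongr
        exact sum_pow_le_pow_of_add_le hcard hρ.le (fun i => (hr i).le) h₁ h₂
    _ = μ (ball 0 ρ) := (μ.addHaar_ball_of_pos 0 hρ).symm

lemma BallDiametersBounded.volume_le {d n : ℕ} (hn : n ≤ 2 ^ d)
    {P : Set (EuclideanSpace ℝ (Fin d))} (hP : IsBallUnion n P) (hB : BallDiametersBounded P) :
    volume P ≤ volume (ball (0 : EuclideanSpace ℝ (Fin d)) (1 / 2)) := by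
  obtain ⟨c, r, hr, hdisj, rfl⟩ := hP
  have hsub (i : Fin n) : ball (c i) (r i) ⊆ ⋃ j, ball (c j) (r j) :=
    Set.subset_iUnion (fun j => ball (c j) (r j)) i
  refine measure_iUnion_ball_le_of_add_le volume (by simpa using hn) c hr one_half_pos
    (fun i => ?_) (fun i j hij => ?_)
  · linarith [hB.1 _ _ (hr i) (hsub i)]
  · linarith [hB.2 _ _ _ _ (hr i) (hr j) (hdisj hij) (hsub i) (hsub j)]

lemma exists_lt_measure_ball_of_lt {X : Type*} [PseudoMetricSpace X] [MeasurableSpace X]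
    (μ : Measure X) {x : X} {r : ℝ} {b : ENNReal} (h : b < μ (ball x r)) :
    ∃ s ∈ Set.Ioo 0 r, b < μ (ball x s) := by
  have hmono : Monotone fun s : Set.Iio r => ball x (s : ℝ) := fun s t hst => ball_subset_ball hst
  rw [← biUnion_lt_ball] at h
  change b < μ (⋃ s ∈ Set.Iio r, ball x s) at h
  rw [Set.biUnion_eq_iUnion, hmono.measure_iUnion, lt_iSup_iff] at h
  obtain ⟨⟨s, hs⟩, hb⟩ := h
  refine ⟨s, ⟨lt_of_not_ge fun hs₀ => ?_, hs⟩, hb⟩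
  rw [ball_eq_empty.2 hs₀, measure_empty] at hb
  exact ENNReal.not_lt_zero hb

section Construction

variable {E : Type*} [NormedAddCommGroup E] [NormedSpace ℝ E]

lemma pairwise_disjoint_ball_of_monotone {u : E} (hu : ‖u‖ = 1) {a : ℕ → ℝ} (ha : Monotone a) :
    Pairwise fun i j => Disjoint (ball (((a i + a (i + 1)) / 2) • u) ((a (i + 1) - a i) / 2))
      (ball (((a j + a (j + 1)) / 2) • u) ((a (j + 1) - a j) / 2)) := by
  refine (pairwise_disjoint_on _).2 fun i j hij => ball_disjoint_ball ?_
  have hij' : a (i + 1) ≤ a j := ha hij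
  have hj : a j ≤ a (j + 1) := ha j.le_succ
  rw [dist_eq_norm, ← sub_smul, norm_smul, hu, mul_one, Real.norm_eq_abs, abs_sub_comm,
    abs_of_nonneg (by linarith [ha i.le_succ])]
  linarith

def chainEndpoints (R s : ℝ) : ℕ → ℝ
  | 0 => -R
  | k + 1 => R + k * s

lemma chainEndpoints_strictMono {R s : ℝ} (hR : 0 < R) (hs : 0 < s) :
    StrictMono (chainEndpoints R s) := by
  refine strictMono_nat_of_lt_succ fun k => ?_
  cases k with
  | zero => simp only [chainEndpoints, Nat.cast_zero, zero_mul, add_zero]; linarith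
  | succ k => simp only [chainEndpoints, Nat.cast_succ]; nlinarith

lemma exists_pairwise_disjoint_ball_between [Nontrivial E] {R ρ : ℝ} (hR : 0 < R) (hRρ : R < ρ)
    {n : ℕ} (hn : 0 < n) :
    ∃ c : Fin n → E, ∃ r : Fin n → ℝ, (∀ i, 0 < r i ∧ r i < ρ) ∧
      (Pairwise fun i j => Disjoint (ball (c i) (r i)) (ball (c j) (r j))) ∧
      ball 0 R ⊆ ⋃ i, ball (c i) (r i) ∧ ⋃ i, ball (c i) (r i) ⊆ ball 0 ρ := by
  obtain ⟨u, hu⟩ := exists_norm_eq E zero_le_one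
  set a := chainEndpoints R ((ρ - R) / n)
  have ha : StrictMono a := chainEndpoints_strictMono hR (div_pos (by linarith) (by positivity))
  have ha_mem : ∀ k ≤ n, a k ∈ Set.Ioo (-ρ) ρ := by
    rintro (_ | k) hk
    · exact ⟨by simp only [a, chainEndpoints]; linarith, by simp only [a, chainEndpoints]; linarith⟩
    · have hkn : (k : ℝ) < n := by exact_mod_cast hk
      have : (k : ℝ) * ((ρ - R) / n) < ρ - R := by
        rw [mul_div_assoc', div_lt_iff₀ (by positivity)]
        nlinarith
      simp only [a, chainEndpoints, Set.mem_Ioo]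
      constructor <;> nlinarith [div_pos (sub_pos.2 hRρ) (Nat.cast_pos.2 hn)]
  refine ⟨fun i => ((a i + a (i + 1)) / 2) • u, fun i => (a (i + 1) - a i) / 2, fun i => ?_,
    (pairwise_disjoint_ball_of_monotone hu ha.monotone).comp_of_injective Fin.val_injective,
    ?_, Set.iUnion_subset fun i => ball_subset_ball' ?_⟩
  · have h₀ := ha_mem i i.is_le'
    have h₁ := ha_mem (i + 1) i.is_lt
    exact ⟨by linarith [ha (Nat.lt_succ_self i)], by linarith [h₀.1, h₁.2]⟩
  · refine Set.subset_iUnion_of_subset ⟨0, hn⟩ (le_of_eq ?_)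
    simp only [a, chainEndpoints, Nat.cast_zero, zero_mul, add_zero, neg_add_cancel, zero_div,
      zero_smul, sub_neg_eq_add, add_self_div_two]
  · have h₀ := ha_mem i i.is_le'
    have h₁ := ha_mem (i + 1) i.is_lt
    rw [dist_zero_right, norm_smul, hu, mul_one, Real.norm_eq_abs]
    rcases abs_cases ((a i + a (i + 1)) / 2) with ⟨h, -⟩ | ⟨h, -⟩ <;> rw [h] <;>
      linarith [h₀.1, h₁.2]

end Construction

section Euclidean

variable {d : ℕ}

lemma avoidsIntegralDistances_of_subset_ball {P : Set (EuclideanSpace ℝ (Fin d))}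
    {x : EuclideanSpace ℝ (Fin d)} (hP : P ⊆ ball x (1 / 2)) : AvoidsIntegralDistances P := by
  intro y hy z hz k hk
  have hyz : dist y z < 1 := (dist_triangle_right y z x).trans_lt <| by
    linarith [mem_ball.1 (hP hy), mem_ball.1 (hP hz)]
  exact (hyz.trans_le (by exact_mod_cast hk)).ne

lemma lineCondition_of_subset_ball {P : Set (EuclideanSpace ℝ (Fin d))}
    {x : EuclideanSpace ℝ (Fin d)} (hP : P ⊆ ball x (1 / 2)) : LineCondition P := by
  intro p v hv
  calc volume {t : ℝ | p + t • v ∈ P} ≤ Metric.ediam {t : ℝ | p + t • v ∈ P} :=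
        Real.volume_le_diam _
    _ ≤ ENNReal.ofReal 1 := ediam_le_of_forall_dist_le fun s hs t ht => by
        rw [← dist_add_smul_add_smul hv p]
        exact ((dist_triangle_right _ _ x).trans_lt <| by
          linarith [mem_ball.1 (hP hs), mem_ball.1 (hP ht)]).le
    _ = 1 := ENNReal.ofReal_one

lemma sSup_volume_isBallUnion_eq (hd : 0 < d) {n : ℕ} (hn₀ : 0 < n) (hn : n ≤ 2 ^ d)
    {Q : Set (EuclideanSpace ℝ (Fin d)) → Prop} (hQ : ∀ P, Q P → BallDiametersBounded P)
    (hQ_small : ∀ P, P ⊆ ball 0 (1 / 2) → Q P) :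
    sSup {μ | ∃ P, IsBallUnion n P ∧ Q P ∧ μ = volume P} =
      volume (ball (0 : EuclideanSpace ℝ (Fin d)) (1 / 2)) := by
  have := EuclideanSpace.nontrivial_of_pos hd
  refine le_antisymm (sSup_le ?_) (le_of_forall_lt fun b hb => ?_)
  · rintro _ ⟨P, hP, hQP, rfl⟩
    exact (hQ P hQP).volume_le hn hP
  · obtain ⟨R, hR, hbR⟩ := exists_lt_measure_ball_of_lt volume hb
    obtain ⟨c, r, hr, hdisj, hsub, hsup⟩ :=
      exists_pairwise_disjoint_ball_between (E := EuclideanSpace ℝ (Fin d)) hR.1 hR.2 hn₀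
    exact hbR.trans_le <| (measure_mono hsub).trans <|
      le_sSup ⟨_, ⟨c, r, fun i => (hr i).1, hdisj, rfl⟩, hQ_small _ hsup, rfl⟩

end Euclidean

theorem ball_union_construction_and_small_n
    (d : ℕ) (hd : 2 ≤ d) :
    (∀ ε ∈ Set.Ioo (0 : ℝ) 1, ∀ n : ℕ, 1 ≤ n →
      ∃ P : Set (EuclideanSpace ℝ (Fin d)),
        (∃ c : Fin n → EuclideanSpace ℝ (Fin d), ∃ r : Fin n → ℝ,
          (∀ i, 0 < r i ∧ 2 * r i < 1) ∧
          (Pairwise fun i j => Disjoint (ball (c i) (r i)) (ball (c j) (r j))) ∧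
          P = ⋃ i, ball (c i) (r i)) ∧
        AvoidsIntegralDistances P ∧ LineCondition P ∧
        ENNReal.ofReal (1 - ε) * volume (ball (0 : EuclideanSpace ℝ (Fin d)) (1/2)) <
          volume P) ∧
    (∀ n : ℕ, 1 ≤ n → n ≤ 2 ^ d →
      fCirc d n = volume (ball (0 : EuclideanSpace ℝ (Fin d)) (1/2)) ∧
      lCirc d n = volume (ball (0 : EuclideanSpace ℝ (Fin d)) (1/2))) := by
  have hd₀ : 0 < d := by omega
  have := EuclideanSpace.nontrivial_of_pos hd₀
  refine ⟨fun ε hε n hn => ?_, fun n hn₀ hn =>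
    ⟨sSup_volume_isBallUnion_eq hd₀ hn₀ hn (fun _ hP => hP.ballDiametersBounded hd₀)
      fun _ => avoidsIntegralDistances_of_subset_ball,
    sSup_volume_isBallUnion_eq hd₀ hn₀ hn (fun _ hP => hP.ballDiametersBounded hd₀)
      fun _ => lineCondition_of_subset_ball⟩⟩
  have hV₀ : volume (ball (0 : EuclideanSpace ℝ (Fin d)) (1 / 2)) ≠ 0 :=
    (measure_ball_pos volume 0 one_half_pos).ne'
  have hlt : ENNReal.ofReal (1 - ε) * volume (ball (0 : EuclideanSpace ℝ (Fin d)) (1 / 2)) <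
      volume (ball (0 : EuclideanSpace ℝ (Fin d)) (1 / 2)) := by
    simpa only [one_mul] using ENNReal.mul_lt_mul_left hV₀ measure_ball_lt_top.ne
      (ENNReal.ofReal_lt_one.2 (by linarith [hε.1]))
  obtain ⟨R, hR, hRV⟩ := exists_lt_measure_ball_of_lt volume hlt
  obtain ⟨c, r, hr, hdisj, hsub, hsup⟩ :=
    exists_pairwise_disjoint_ball_between (E := EuclideanSpace ℝ (Fin d)) hR.1 hR.2 hn
  exact ⟨_, ⟨c, r, fun i => ⟨(hr i).1, by linarith [(hr i).2]⟩, hdisj, rfl⟩,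
    avoidsIntegralDistances_of_subset_ball hsup, lineCondition_of_subset_ball hsup,
    hRV.trans_le (measure_mono hsub)⟩
end

section
/- For every integer d ≥ 1 and every integer k ≥ 5, consider S₁, the open ball in ℝ^d of diameter 1 - 2/k centered at the origin truncated by the two hyperplanes x₁ = ±(1/4 - 1/k), and S₂ its translate by (dk + 1/2 - 2/k, 0, …, 0). Then for all a ∈ S₁ and b ∈ S₂ one has dk < dist(a,b) < dk + 1; hence S₁ ∪ S₂ contains no pair of points at positive integer distance. -/
/-!
Write a point of S₂ as b + c • e₀ with b ∈ S₁ and c = dk + 1/2 - 2/k. The truncation keeps the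
first coordinates of S₁ within 1/4 - 1/k of 0, so that coordinate alone gives a distance above
c - (1/2 - 2/k) = dk. For the upper bound, expand
‖(a - b) - c • e₀‖² = ‖a - b‖² - 2c (a - b)₀ + c² with ‖a - b‖ < 1 - 2/k and -(a - b)₀ < 1/2 - 2/k.
Distances inside S₁, and inside its translate S₂, are below 1.
-/

open Metric

section SingleShift

variable {ι : Type*} [Fintype ι] [DecidableEq ι]

lemma EuclideanSpace.norm_sub_smul_single_sq (v : EuclideanSpace ℝ ι) (i : ι) (c : ℝ) :
    ‖v - c • EuclideanSpace.single i 1‖ ^ 2 = ‖v‖ ^ 2 - 2 * c * v i + c ^ 2 := by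
  rw [norm_sub_sq_real, inner_smul_right, EuclideanSpace.inner_single_right, norm_smul,
    PiLp.norm_single]
  simp only [one_mul, norm_one, mul_one, conj_trivial, Real.norm_eq_abs, sq_abs]
  ring

variable {a b : EuclideanSpace ℝ ι} {i : ι} {c r s : ℝ}

lemma sub_lt_dist_add_smul_single (ha : |a i| < s) (hb : |b i| < s) :
    c - 2 * s < dist a (b + c • EuclideanSpace.single i 1) := by
  refine lt_of_lt_of_le ?_ (PiLp.dist_apply_le _ _ i)
  rw [Real.dist_eq]
  simp only [PiLp.add_apply, PiLp.smul_apply, PiLp.single_apply, if_true, smul_eq_mul,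
    mul_one]
  have := neg_abs_le (a i - (b i + c))
  linarith [abs_lt.1 ha, abs_lt.1 hb]

lemma dist_add_smul_single_sq_lt (hc : 0 ≤ c) (ha : ‖a‖ < r) (hb : ‖b‖ < r)
    (hai : |a i| < s) (hbi : |b i| < s) :
    dist a (b + c • EuclideanSpace.single i 1) ^ 2 < (2 * r) ^ 2 + 4 * c * s + c ^ 2 := by
  have hab : ‖a - b‖ < 2 * r := (norm_sub_le a b).trans_lt (by linarith)
  have habi : -(a - b) i < 2 * s := by
    simp only [PiLp.sub_apply]; linarith [abs_lt.1 hai, abs_lt.1 hbi]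
  rw [dist_eq_norm, ← sub_sub, EuclideanSpace.norm_sub_smul_single_sq]
  have := pow_lt_pow_left₀ hab (norm_nonneg _) two_ne_zero
  nlinarith

end SingleShift

lemma truncated_gap_sq_lt {k D : ℝ} (hk : 1 ≤ k) (hD : k ≤ D) :
    (2 * ((1 - 2 / k) / 2)) ^ 2 + 4 * (D + 1 / 2 - 2 / k) * (1 / 4 - 1 / k) +
      (D + 1 / 2 - 2 / k) ^ 2 < (D + 1) ^ 2 := by
  have hk0 : 0 < k := by linarith
  rw [← sub_pos]
  have : (D + 1) ^ 2 - ((2 * ((1 - 2 / k) / 2)) ^ 2 + 4 * (D + 1 / 2 - 2 / k) * (1 / 4 - 1 / k) +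
      (D + 1 / 2 - 2 / k) ^ 2) = (8 * D * k - 3 / 4 * k ^ 2 + 10 * k - 16) / k ^ 2 := by
    field_simp; ring
  rw [this]
  apply div_pos _ (by positivity)
  nlinarith

lemma dist_ne_natCast_of_union_image_add {E : Type*} [SeminormedAddCommGroup E] {S : Set E}
    (v : E) (N : ℕ) (hS : ∀ x ∈ S, ∀ y ∈ S, dist x y < 1)
    (hST : ∀ a ∈ S, ∀ b ∈ (· + v) '' S, (N : ℝ) < dist a b ∧ dist a b < N + 1) :
    ∀ x ∈ S ∪ (· + v) '' S, ∀ y ∈ S ∪ (· + v) '' S, ∀ n : ℕ, 0 < n → dist x y ≠ n := by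
  have not_between (n : ℕ) : ¬((N : ℝ) < n ∧ (n : ℝ) < N + 1) := by
    rintro ⟨h₁, h₂⟩
    norm_cast at h₁ h₂
    omega
  have one_le {n : ℕ} (hn : 0 < n) : (1 : ℝ) ≤ n := by exact_mod_cast hn
  rintro x (hx | ⟨x, hx, rfl⟩) y (hy | ⟨y, hy, rfl⟩) n hn h
  · exact (h ▸ hS x hx y hy).not_ge (one_le hn)
  · exact not_between n (h ▸ hST x hx _ ⟨y, hy, rfl⟩)
  · exact not_between n (h ▸ dist_comm _ y ▸ hST y hy _ ⟨x, hx, rfl⟩)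
  · exact (h ▸ dist_add_right x y v ▸ hS x hx y hy).not_ge (one_le hn)

theorem truncated_balls_avoid_integral_distances
    (d k : ℕ) (hd : 0 < d) (hk : 5 ≤ k)
    (S₁ S₂ : Set (EuclideanSpace ℝ (Fin d)))
    (hS₁ : S₁ = ball (0 : EuclideanSpace ℝ (Fin d)) ((1 - 2 / (k : ℝ)) / 2) ∩
      {x : EuclideanSpace ℝ (Fin d) | |x ⟨0, hd⟩| < 1 / 4 - 1 / (k : ℝ)})
    (hS₂ : S₂ = (fun x : EuclideanSpace ℝ (Fin d) =>
      x + ((d : ℝ) * k + 1 / 2 - 2 / (k : ℝ)) •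
        EuclideanSpace.single (⟨0, hd⟩ : Fin d) (1 : ℝ)) '' S₁) :
    (∀ a ∈ S₁, ∀ b ∈ S₂,
      (d : ℝ) * k < dist a b ∧ dist a b < (d : ℝ) * k + 1) ∧
    (∀ x ∈ S₁ ∪ S₂, ∀ y ∈ S₁ ∪ S₂, ∀ n : ℕ, 0 < n → dist x y ≠ n) := by
  have hk5 : (5 : ℝ) ≤ k := by exact_mod_cast hk
  have hk1 : (1 : ℝ) ≤ k := by linarith
  have hkdk : (k : ℝ) ≤ d * k := le_mul_of_one_le_left (by positivity) (by exact_mod_cast hd)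
  have hc : 0 ≤ (d : ℝ) * k + 1 / 2 - 2 / k := by
    have : 2 / (k : ℝ) ≤ 1 := (div_le_one (by positivity)).2 (by linarith)
    linarith
  have mem : ∀ x ∈ S₁, ‖x‖ < (1 - 2 / (k : ℝ)) / 2 ∧ |x ⟨0, hd⟩| < 1 / 4 - 1 / (k : ℝ) := by
    rw [hS₁]
    exact fun x ⟨hx, hxi⟩ ↦ ⟨mem_ball_zero_iff.1 hx, hxi⟩
  have small : ∀ x ∈ S₁, ∀ y ∈ S₁, dist x y < 1 := by
    rintro x hx y hy
    have := (mem x hx).1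
    have := (mem y hy).1
    have : 0 < 2 / (k : ℝ) := by positivity
    linarith [dist_le_norm_add_norm x y]
  have cross : ∀ a ∈ S₁, ∀ b ∈ S₂, (d : ℝ) * k < dist a b ∧ dist a b < d * k + 1 := by
    rw [hS₂]
    rintro a ha _ ⟨b, hb, rfl⟩
    obtain ⟨ha, hai⟩ := mem a ha
    obtain ⟨hb, hbi⟩ := mem b hb
    constructor
    · convert sub_lt_dist_add_smul_single hai hbi using 1
      ring
    · refine lt_of_pow_lt_pow_left₀ 2 (by positivity) ?_
      exact (dist_add_smul_single_sq_lt hc ha hb hai hbi).trans (truncated_gap_sq_lt hk1 hkdk)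
  refine ⟨cross, hS₂ ▸ dist_ne_natCast_of_union_image_add _ (d * k) small ?_⟩
  exact_mod_cast hS₂ ▸ cross
end
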